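/- Let $\tau \in S_{2n}$ be an involution that is a signed element ($\tau(2n+1-i) = 2n+1-\tau(i)$ for all $i$), acting on the torus $T = \{\mathrm{diag}(a_1,\ldots,a_n,a_n^{-1},\ldots,a_1^{-1}) : a_i \in \mathbb{C}^*\}$ by permuting coordinates. Let $k = \#\{i \in \{1,\ldots,n\} : \tau(i) = i\}$. If $\tau(i) \ne 2n+1-i$ for all $i$, then the group $T_\tau = \{t \in T : t\,\tau(t) \in \{\pm I\}\}$ satisfies $|T_\tau / (T^{-\tau})_0| = 2^{k+1}$, where $T^{-\tau} = \{t : t\,\tau(t) = I\}$ and $(T^{-\tau})_0 \cong (\mathbb{C}^*)^{n-k'}$ is its identity component. If instead $\tau(i) = 2n+1-i$ for some $i$, then $|T_\tau/(T^{-\tau})_0| = 2^k$. -/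
import Mathlib


/-- `T ≅ (ℂ*)^n` embedded in `GL(2n,ℂ)` as `diag(a_1,…,a_n,a_n⁻¹,…,a_1⁻¹)`:
`toBig t` is the full list of `2n` diagonal entries. -/
noncomputable def toBig (n : ℕ) (t : Fin n → ℂˣ) : Fin (2 * n) → ℂˣ :=
  fun j => if h : (j : ℕ) < n then t ⟨j, h⟩ else (t ⟨2 * n - 1 - (j : ℕ), by omega⟩)⁻¹

/-- The action of a signed element `τ ∈ S_{2n}` on `T`: it permutes the diagonal
entries, `τ(diag b) = diag (b ∘ τ⁻¹)`; read off the first `n` coordinates. -/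
noncomputable def tauAct (n : ℕ) (τ : Equiv.Perm (Fin (2 * n))) (t : Fin n → ℂˣ) :
    Fin n → ℂˣ :=
  fun i => toBig n t (τ⁻¹ ⟨i, by omega⟩)

lemma toBig_mul (n : ℕ) (s t : Fin n → ℂˣ) :
    toBig n (s * t) = toBig n s * toBig n t := by
  funext j
  simp only [toBig, Pi.mul_apply]
  split <;> simp [mul_inv, mul_comm]

/-- The homomorphism `t ↦ t · τ(t)` of `T`. -/
noncomputable def fHom (n : ℕ) (τ : Equiv.Perm (Fin (2 * n))) :
    (Fin n → ℂˣ) →* (Fin n → ℂˣ) where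
  toFun t := t * tauAct n τ t
  map_one' := by
    funext i
    simp [tauAct, toBig]
  map_mul' s t := by
    have h : tauAct n τ (s * t) = tauAct n τ s * tauAct n τ t := by
      funext i
      simp [tauAct, toBig_mul n s t]
    show s * t * tauAct n τ (s * t) = s * tauAct n τ s * (t * tauAct n τ t)
    rw [h]
    funext i
    simp only [Pi.mul_apply]
    exact mul_mul_mul_comm _ _ _ _

/-- The element `-I` of `T`. -/
noncomputable def negOne (n : ℕ) : Fin n → ℂˣ := fun _ => (-1 : ℂˣ)

/-- `T_τ = {t ∈ T : t·τ(t) ∈ {±I}}`, as a subgroup of `T`. -/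
noncomputable def Ttau (n : ℕ) (τ : Equiv.Perm (Fin (2 * n))) :
    Subgroup (Fin n → ℂˣ) :=
  Subgroup.comap (fHom n τ) (Subgroup.zpowers (negOne n))

/-- The identity component `(T^{-τ})_0` of `T^{-τ} = {t : t·τ(t) = I}`,
as a subgroup of `T`. -/
noncomputable def TminusComp (n : ℕ) (τ : Equiv.Perm (Fin (2 * n))) :
    Subgroup (Fin n → ℂˣ) :=
  Subgroup.map (fHom n τ).ker.subtype
    (Subgroup.connectedComponentOfOne ↥(fHom n τ).ker)

/-! ### auxiliary machinery -/

def emb (n : ℕ) (i : Fin n) : Fin (2 * n) := ⟨(i : ℕ), by omega⟩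

@[simp] lemma emb_val (n : ℕ) (i : Fin n) : ((emb n i : Fin (2 * n)) : ℕ) = (i : ℕ) := rfl

lemma emb_inj {n : ℕ} {i j : Fin n} (h : emb n i = emb n j) : i = j := by
  apply Fin.ext
  have := congrArg Fin.val h
  exact this

/-- partner index -/
def pt (n : ℕ) (τ : Equiv.Perm (Fin (2 * n))) (i : Fin n) : Fin n :=
  if h : ((τ (emb n i)) : ℕ) < n then ⟨_, h⟩
  else ⟨2 * n - 1 - ((τ (emb n i)) : ℕ), by have := (τ (emb n i)).isLt; omega⟩

section Struct

variable {n : ℕ} {τ : Equiv.Perm (Fin (2 * n))}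

lemma tau_tau (hτ : τ * τ = 1) (j : Fin (2 * n)) : τ (τ j) = j := by
  have : (τ * τ) j = (1 : Equiv.Perm (Fin (2 * n))) j := by rw [hτ]
  simpa using this

lemma tau_emb_same (i : Fin n) (h : ((τ (emb n i)) : ℕ) < n) :
    τ (emb n i) = emb n (pt n τ i) := by
  simp only [pt, dif_pos h]; exact Fin.ext rfl

lemma tau_emb_cross (i : Fin n) (h : ¬ ((τ (emb n i)) : ℕ) < n) :
    τ (emb n i) = (emb n (pt n τ i)).rev := by
  apply Fin.ext
  rw [Fin.val_rev]
  simp only [pt, dif_neg h, emb_val]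
  have := (τ (emb n i)).isLt
  omega

lemma tau_emb_pt_same (hτ : τ * τ = 1) (i : Fin n) (h : ((τ (emb n i)) : ℕ) < n) :
    τ (emb n (pt n τ i)) = emb n i := by
  rw [← tau_emb_same i h, tau_tau hτ]

lemma tau_emb_pt_cross (hτ : τ * τ = 1) (hs : ∀ j : Fin (2 * n), τ j.rev = (τ j).rev) (i : Fin n) (h : ¬ ((τ (emb n i)) : ℕ) < n) :
    τ (emb n (pt n τ i)) = (emb n i).rev := by
  have h1 : τ ((emb n (pt n τ i)).rev) = emb n i := by
    rw [← tau_emb_cross i h, tau_tau hτ]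
  have h2 := hs (emb n (pt n τ i))
  rw [h1] at h2
  have h3 : (τ (emb n (pt n τ i))).rev = emb n i := h2.symm
  rw [← h3, Fin.rev_rev]

lemma pt_lt_iff (hτ : τ * τ = 1) (hs : ∀ j : Fin (2 * n), τ j.rev = (τ j).rev) (i : Fin n) :
    ((τ (emb n (pt n τ i))) : ℕ) < n ↔ ((τ (emb n i)) : ℕ) < n := by
  by_cases h : ((τ (emb n i)) : ℕ) < n
  · rw [tau_emb_pt_same hτ i h]; simpa using h
  · rw [tau_emb_pt_cross hτ hs i h]
    rw [Fin.val_rev]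
    simp only [emb_val]
    have := i.isLt
    constructor
    · intro hc; omega
    · intro hc; exact absurd hc h

lemma pt_val_lt (i : Fin n) (h : ((τ (emb n i)) : ℕ) < n) :
    ((pt n τ i : Fin n) : ℕ) = ((τ (emb n i)) : ℕ) := by
  simp only [pt, dif_pos h]

lemma pt_val_ge (i : Fin n) (h : ¬ ((τ (emb n i)) : ℕ) < n) :
    ((pt n τ i : Fin n) : ℕ) = 2 * n - 1 - ((τ (emb n i)) : ℕ) := by
  simp only [pt, dif_neg h]

lemma pt_pt (hτ : τ * τ = 1) (hs : ∀ j : Fin (2 * n), τ j.rev = (τ j).rev) (i : Fin n) :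
    pt n τ (pt n τ i) = i := by
  by_cases h : ((τ (emb n i)) : ℕ) < n
  · have h2 := tau_emb_pt_same hτ i h
    have hlt2 : ((τ (emb n (pt n τ i))) : ℕ) < n := by
      rw [h2, emb_val]; exact i.isLt
    apply Fin.ext
    rw [pt_val_lt _ hlt2, h2, emb_val]
  · have h2 := tau_emb_pt_cross hτ hs i h
    have h3 : ¬ ((τ (emb n (pt n τ i))) : ℕ) < n := by
      rw [← pt_lt_iff hτ hs i] at h; exact h
    apply Fin.ext
    rw [pt_val_ge _ h3, h2, Fin.val_rev, emb_val]
    have := i.isLt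
    omega

lemma fHom_apply (hτ : τ * τ = 1) (t : Fin n → ℂˣ) (i : Fin n) :
    fHom n τ t i = t i * (if ((τ (emb n i)) : ℕ) < n then t (pt n τ i) else (t (pt n τ i))⁻¹) := by
  have h1 : fHom n τ t i = t i * toBig n t (τ⁻¹ (emb n i)) := rfl
  rw [h1, (eq_inv_of_mul_eq_one_left hτ).symm]
  congr 1
  unfold toBig
  by_cases h : ((τ (emb n i)) : ℕ) < n
  · rw [dif_pos h, if_pos h]
    congr 1
    simp only [pt, dif_pos h]
  · rw [dif_neg h, if_neg h]
    congr 2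
    simp only [pt, dif_neg h]

lemma fixed_iff (i : Fin n) :
    τ (emb n i) = emb n i ↔ (((τ (emb n i)) : ℕ) < n ∧ pt n τ i = i) := by
  constructor
  · intro h
    have hlt : ((τ (emb n i)) : ℕ) < n := by rw [h]; simpa using i.isLt
    refine ⟨hlt, ?_⟩
    apply emb_inj (n := n)
    rw [← tau_emb_same i hlt, h]
  · rintro ⟨hlt, hpt⟩
    rw [tau_emb_same i hlt, hpt]

lemma revfix_iff (i : Fin n) :
    τ (emb n i) = (emb n i).rev ↔ (¬ ((τ (emb n i)) : ℕ) < n ∧ pt n τ i = i) := by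
  constructor
  · intro h
    have hlt : ¬ ((τ (emb n i)) : ℕ) < n := by
      rw [h, Fin.val_rev]
      simp only [emb_val]
      have := i.isLt
      omega
    refine ⟨hlt, ?_⟩
    apply emb_inj (n := n)
    have := tau_emb_cross (τ := τ) i hlt
    rw [h] at this
    have := Fin.rev_injective this
    exact this.symm
  · rintro ⟨hlt, hpt⟩
    rw [tau_emb_cross i hlt, hpt]

end Struct

section Alg

variable {n : ℕ} {τ : Equiv.Perm (Fin (2 * n))}

/-- projection onto the fixed coordinates -/
noncomputable def Pfix (n : ℕ) (τ : Equiv.Perm (Fin (2 * n))) :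
    (Fin n → ℂˣ) →* (Fin n → ℂˣ) where
  toFun t := fun i => if τ (emb n i) = emb n i then t i else 1
  map_one' := by
    funext i
    simp only [Pi.one_apply]
    split <;> rfl
  map_mul' s t := by
    funext i
    by_cases h : τ (emb n i) = emb n i <;> simp [h]

noncomputable def Phi (n : ℕ) (τ : Equiv.Perm (Fin (2 * n))) :
    (Fin n → ℂˣ) →* (Fin n → ℂˣ) × (Fin n → ℂˣ) :=
  (fHom n τ).prod (Pfix n τ)

lemma mem_PhiKer_iff (t : Fin n → ℂˣ) :
    t ∈ (Phi n τ).ker ↔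
      (fHom n τ t = 1 ∧ ∀ i : Fin n, τ (emb n i) = emb n i → t i = 1) := by
  rw [MonoidHom.mem_ker, Phi, MonoidHom.prod_apply, Prod.mk_eq_one]
  constructor
  · rintro ⟨h1, h2⟩
    refine ⟨h1, fun i hi => ?_⟩
    have := congrFun h2 i
    simpa [Pfix, hi] using this
  · rintro ⟨h1, h2⟩
    refine ⟨h1, ?_⟩
    funext i
    by_cases hi : τ (emb n i) = emb n i
    · simpa [Pfix, hi] using h2 i hi
    · simp [Pfix, hi]

lemma negOne_mul_negOne : negOne n * negOne n = 1 := by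
  funext i
  simp [negOne]

lemma mem_Ttau_iff (t : Fin n → ℂˣ) :
    t ∈ Ttau n τ ↔ (fHom n τ t = 1 ∨ fHom n τ t = negOne n) := by
  rw [Ttau, Subgroup.mem_comap]
  constructor
  · intro h
    obtain ⟨z, hz⟩ := Subgroup.mem_zpowers_iff.mp h
    rcases Int.even_or_odd z with ⟨m, hm⟩ | ⟨m, hm⟩
    · left
      rw [← hz, hm, ← two_mul, zpow_mul]
      have : (negOne n : Fin n → ℂˣ) ^ (2 : ℤ) = 1 := by
        rw [zpow_two]; exact negOne_mul_negOne
      rw [this, one_zpow]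
    · right
      rw [← hz, hm, zpow_add, zpow_mul]
      have : (negOne n : Fin n → ℂˣ) ^ (2 : ℤ) = 1 := by
        rw [zpow_two]; exact negOne_mul_negOne
      rw [this, one_zpow, one_mul, zpow_one]
  · rintro (h | h)
    · rw [h]; exact one_mem _
    · rw [h]; exact Subgroup.mem_zpowers _

/-- building an element of `T` with prescribed `fHom` value `ε` and fixed coordinates `b` -/
noncomputable def bld (n : ℕ) (τ : Equiv.Perm (Fin (2 * n))) (ε : ℂˣ) (b : Fin n → ℂˣ) :
    Fin n → ℂˣ :=
  fun i => if τ (emb n i) = emb n i then b i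
    else if ((pt n τ i : Fin n) : ℕ) < (i : ℕ) then ε else 1

lemma fHom_bld (hτ : τ * τ = 1) (hs : ∀ j : Fin (2 * n), τ j.rev = (τ j).rev)
    (ε : ℂˣ) (b : Fin n → ℂˣ) (hε : ε * ε = 1)
    (hb : ∀ i : Fin n, τ (emb n i) = emb n i → b i * b i = ε)
    (hrev : ∀ i : Fin n, τ (emb n i) = (emb n i).rev → ε = 1) :
    fHom n τ (bld n τ ε b) = fun _ => ε := by
  have hεinv : ε⁻¹ = ε := by
    rw [inv_eq_iff_mul_eq_one, hε]
  funext i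
  rw [fHom_apply hτ]
  by_cases hlt : ((τ (emb n i)) : ℕ) < n
  · rw [if_pos hlt]
    by_cases hfix : τ (emb n i) = emb n i
    · have hpt : pt n τ i = i := ((fixed_iff i).mp hfix).2
      rw [hpt]
      simp only [bld, if_pos hfix]
      exact hb i hfix
    · have hne : pt n τ i ≠ i := fun hpt => hfix ((fixed_iff i).mpr ⟨hlt, hpt⟩)
      have hfix2 : ¬ τ (emb n (pt n τ i)) = emb n (pt n τ i) := by
        rw [tau_emb_pt_same hτ i hlt]
        intro hcon
        exact hne (emb_inj hcon).symm
      have hvne : ((pt n τ i : Fin n) : ℕ) ≠ (i : ℕ) := fun hv => hne (Fin.ext hv)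
      have hppt : pt n τ (pt n τ i) = i := pt_pt hτ hs i
      rcases lt_or_gt_of_ne hvne with hlt2 | hlt2
      · -- pt i < i : bld i = ε, bld (pt i) = 1
        simp only [bld, if_neg hfix, if_pos hlt2, if_neg hfix2, hppt]
        rw [if_neg (by omega), mul_one]
      · -- i < pt i : bld i = 1, bld (pt i) = ε
        simp only [bld, if_neg hfix, if_neg hfix2, hppt]
        rw [if_neg (by omega), if_pos (by omega), one_mul]
  · rw [if_neg hlt]
    have hfix : ¬ τ (emb n i) = emb n i := by
      intro hcon
      exact hlt ((fixed_iff i).mp hcon).1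
    by_cases hpt : pt n τ i = i
    · have hrevi : τ (emb n i) = (emb n i).rev := (revfix_iff i).mpr ⟨hlt, hpt⟩
      have hε1 : ε = 1 := hrev i hrevi
      simp only [bld, if_neg hfix, hpt]
      rw [if_neg (by omega)]
      simp [hε1]
    · have hne := hpt
      have hfix2 : ¬ τ (emb n (pt n τ i)) = emb n (pt n τ i) := by
        intro hcon
        have := ((fixed_iff (pt n τ i)).mp hcon).1
        rw [← pt_lt_iff hτ hs i] at hlt
        exact hlt this
      have hvne : ((pt n τ i : Fin n) : ℕ) ≠ (i : ℕ) := fun hv => hne (Fin.ext hv)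
      have hppt : pt n τ (pt n τ i) = i := pt_pt hτ hs i
      rcases lt_or_gt_of_ne hvne with hlt2 | hlt2
      · simp only [bld, if_neg hfix, if_pos hlt2, if_neg hfix2, hppt]
        rw [if_neg (by omega), inv_one, mul_one]
      · simp only [bld, if_neg hfix, if_neg hfix2, hppt]
        rw [if_neg (by omega), if_pos (by omega), one_mul, hεinv]

lemma Pfix_bld (ε : ℂˣ) (b : Fin n → ℂˣ) :
    Pfix n τ (bld n τ ε b) = fun i => if τ (emb n i) = emb n i then b i else 1 := by
  funext i
  by_cases h : τ (emb n i) = emb n i <;> simp [Pfix, bld, h]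

end Alg

section Topo

open Complex

variable {n : ℕ} {τ : Equiv.Perm (Fin (2 * n))}

lemma units_sq_one {u : ℂˣ} (h : u * u = 1) : u = 1 ∨ u = -1 := by
  have hv : (u : ℂ) * (u : ℂ) = 1 := by
    have := congrArg (Units.val) h
    simpa using this
  rcases mul_self_eq_one_iff.mp hv with h1 | h1
  · left; exact Units.ext (by simpa using h1)
  · right; exact Units.ext (by simpa using h1)

noncomputable def upath (a : ℂˣ) (s : ℝ) : ℂˣ :=
  ⟨Complex.exp ((s : ℂ) * Complex.log (a : ℂ)),
   Complex.exp (-((s : ℂ) * Complex.log (a : ℂ))),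
   by rw [← Complex.exp_add]; simp,
   by rw [← Complex.exp_add]; simp⟩

@[simp] lemma upath_zero (a : ℂˣ) : upath a 0 = 1 := by
  apply Units.ext
  simp [upath]

@[simp] lemma upath_one (a : ℂˣ) : upath a 1 = a := by
  apply Units.ext
  simp [upath, Complex.exp_log (Units.ne_zero a)]

lemma upath_continuous (a : ℂˣ) : Continuous (fun s : ℝ => upath a s) := by
  apply Units.continuous_iff.mpr
  constructor
  · show Continuous fun s : ℝ => Complex.exp ((s : ℂ) * Complex.log (a : ℂ))
    exact Complex.continuous_exp.comp (Complex.continuous_ofReal.mul continuous_const)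
  · show Continuous fun s : ℝ => Complex.exp (-((s : ℂ) * Complex.log (a : ℂ)))
    exact Complex.continuous_exp.comp (Complex.continuous_ofReal.mul continuous_const).neg

noncomputable def gpath (n : ℕ) (τ : Equiv.Perm (Fin (2 * n))) (t : Fin n → ℂˣ) (s : ℝ) :
    Fin n → ℂˣ :=
  fun i =>
    if τ (emb n i) = emb n i then 1
    else if (i : ℕ) ≤ ((pt n τ i : Fin n) : ℕ) then upath (t i) s
    else if ((τ (emb n i)) : ℕ) < n then (upath (t (pt n τ i)) s)⁻¹
    else upath (t (pt n τ i)) s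

lemma gpath_zero (t : Fin n → ℂˣ) : gpath n τ t 0 = 1 := by
  funext i
  simp only [gpath, upath_zero, inv_one, Pi.one_apply]
  split <;> [rfl; (split <;> [rfl; (split <;> rfl)])]

lemma gpath_one (hτ : τ * τ = 1) (t : Fin n → ℂˣ)
    (h1 : fHom n τ t = 1) (h2 : ∀ i : Fin n, τ (emb n i) = emb n i → t i = 1) :
    gpath n τ t 1 = t := by
  funext i
  have hrel := congrFun h1 i
  rw [fHom_apply hτ, Pi.one_apply] at hrel
  simp only [gpath, upath_one]
  by_cases hfix : τ (emb n i) = emb n i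
  · rw [if_pos hfix, (h2 i hfix)]
  · rw [if_neg hfix]
    by_cases hle : (i : ℕ) ≤ ((pt n τ i : Fin n) : ℕ)
    · rw [if_pos hle]
    · rw [if_neg hle]
      by_cases hlt : ((τ (emb n i)) : ℕ) < n
      · rw [if_pos hlt]
        rw [if_pos hlt] at hrel
        exact inv_eq_of_mul_eq_one_left hrel
      · rw [if_neg hlt]
        rw [if_neg hlt] at hrel
        exact (mul_inv_eq_one.mp hrel).symm

lemma gpath_fHom (hτ : τ * τ = 1) (hs : ∀ j : Fin (2 * n), τ j.rev = (τ j).rev)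
    (t : Fin n → ℂˣ) (s : ℝ) : fHom n τ (gpath n τ t s) = 1 := by
  funext i
  rw [fHom_apply hτ, Pi.one_apply]
  by_cases hfix : τ (emb n i) = emb n i
  · obtain ⟨hlt, hpt⟩ := (fixed_iff i).mp hfix
    rw [if_pos hlt, hpt]
    simp [gpath, hfix]
  · have hppt : pt n τ (pt n τ i) = i := pt_pt hτ hs i
    by_cases hlt : ((τ (emb n i)) : ℕ) < n
    · rw [if_pos hlt]
      have hne : pt n τ i ≠ i := fun hpt => hfix ((fixed_iff i).mpr ⟨hlt, hpt⟩)
      have hvne : ((pt n τ i : Fin n) : ℕ) ≠ (i : ℕ) := fun hv => hne (Fin.ext hv)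
      have hfix2 : ¬ τ (emb n (pt n τ i)) = emb n (pt n τ i) := by
        rw [tau_emb_pt_same hτ i hlt]
        intro hcon
        exact hne (emb_inj hcon).symm
      have hlt2 : ((τ (emb n (pt n τ i))) : ℕ) < n := (pt_lt_iff hτ hs i).mpr hlt
      rcases lt_or_gt_of_ne hvne with hc | hc
      · -- pt i < i
        simp only [gpath, if_neg hfix, if_neg hfix2, hppt]
        rw [if_neg (by omega), if_pos hlt, if_pos (by omega : ((pt n τ i : Fin n) : ℕ) ≤ (i : ℕ))]
        simp
      · -- i < pt i
        simp only [gpath, if_neg hfix, if_neg hfix2, hppt]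
        rw [if_pos (by omega : (i : ℕ) ≤ ((pt n τ i : Fin n) : ℕ)), if_neg (by omega), if_pos hlt2]
        simp
    · rw [if_neg hlt]
      by_cases hpt : pt n τ i = i
      · rw [hpt]
        simp
      · have hvne : ((pt n τ i : Fin n) : ℕ) ≠ (i : ℕ) := fun hv => hpt (Fin.ext hv)
        have hlt2 : ¬ ((τ (emb n (pt n τ i))) : ℕ) < n := by
          intro hcon
          exact hlt ((pt_lt_iff hτ hs i).mp hcon)
        have hfix2 : ¬ τ (emb n (pt n τ i)) = emb n (pt n τ i) := by
          intro hcon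
          exact hlt2 ((fixed_iff (pt n τ i)).mp hcon).1
        rcases lt_or_gt_of_ne hvne with hc | hc
        · -- pt i < i
          simp only [gpath, if_neg hfix, if_neg hfix2, hppt]
          rw [if_neg (by omega), if_neg hlt, if_neg hlt2,
            if_pos (by omega : ((pt n τ i : Fin n) : ℕ) ≤ (i : ℕ))]
          simp
        · -- i < pt i
          simp only [gpath, if_neg hfix, if_neg hfix2, hppt]
          rw [if_pos (by omega : (i : ℕ) ≤ ((pt n τ i : Fin n) : ℕ)), if_neg (by omega),
            if_neg hlt2]
          simp

lemma gpath_continuous (t : Fin n → ℂˣ) : Continuous (fun s : ℝ => gpath n τ t s) := by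
  apply continuous_pi
  intro i
  unfold gpath
  apply Continuous.if_const
  · exact continuous_const
  apply Continuous.if_const
  · exact upath_continuous _
  apply Continuous.if_const
  · exact (upath_continuous _).inv
  · exact upath_continuous _

end Topo

section Comp

variable {n : ℕ} {τ : Equiv.Perm (Fin (2 * n))}

lemma TminusComp_eq (hτ : τ * τ = 1) (hs : ∀ j : Fin (2 * n), τ j.rev = (τ j).rev) :
    TminusComp n τ = (Phi n τ).ker := by
  ext x
  constructor
  · intro hx
    rw [TminusComp, Subgroup.mem_map] at hx
    obtain ⟨y, hy, rfl⟩ := hx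
    rw [mem_PhiKer_iff]
    have hker : fHom n τ ((fHom n τ).ker.subtype y) = 1 := y.2
    refine ⟨hker, fun i hi => ?_⟩
    -- connectedness argument : fixed coordinates are 1 on the component of 1
    have hy' : y ∈ connectedComponent (1 : ↥(fHom n τ).ker) := hy
    set f : ↥(fHom n τ).ker → ℝ := fun z => (((z : Fin n → ℂˣ) i : ℂˣ) : ℂ).re with hf
    have hcont : Continuous f :=
      Complex.continuous_re.comp
        (Units.continuous_val.comp ((continuous_apply i).comp continuous_subtype_val))
    have hvals : ∀ z : ↥(fHom n τ).ker,
        (z : Fin n → ℂˣ) i = 1 ∨ (z : Fin n → ℂˣ) i = -1 := by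
      intro z
      have hz : fHom n τ (z : Fin n → ℂˣ) = 1 := z.2
      have hz2 := congrFun hz i
      rw [fHom_apply hτ, Pi.one_apply] at hz2
      obtain ⟨hlt, hpt⟩ := (fixed_iff i).mp hi
      rw [if_pos hlt, hpt] at hz2
      exact units_sq_one hz2
    by_contra hne
    have hyneg : (y : Fin n → ℂˣ) i = -1 := by
      rcases hvals y with h | h
      · exact absurd h hne
      · exact h
    set S := f '' connectedComponent (1 : ↥(fHom n τ).ker) with hS
    have hSconn : IsPreconnected S :=
      isPreconnected_connectedComponent.image f hcont.continuousOn
    have h1 : (1 : ℝ) ∈ S := ⟨1, mem_connectedComponent, by simp [hf]⟩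
    have h2 : (-1 : ℝ) ∈ S := ⟨y, hy', by simp [hf, hyneg]⟩
    have h0 : (0 : ℝ) ∈ S := hSconn.Icc_subset h2 h1 (by norm_num)
    obtain ⟨z, _, hz0⟩ := h0
    rcases hvals z with h | h <;> rw [hf] at hz0 <;> simp [h] at hz0
  · intro hx
    obtain ⟨hx1, hx2⟩ := (mem_PhiKer_iff x).mp hx
    rw [TminusComp, Subgroup.mem_map]
    have hxker : x ∈ (fHom n τ).ker := hx1
    refine ⟨⟨x, hxker⟩, ?_, rfl⟩
    have hmem : ∀ s : ℝ, gpath n τ x s ∈ (fHom n τ).ker := fun s => gpath_fHom hτ hs x s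
    set γ : ℝ → ↥(fHom n τ).ker := fun s => ⟨gpath n τ x s, hmem s⟩ with hγdef
    have hγ : Continuous γ := (gpath_continuous x).subtype_mk _
    have hrange : IsPreconnected (Set.range γ) := isPreconnected_range hγ
    have h1 : (1 : ↥(fHom n τ).ker) ∈ Set.range γ :=
      ⟨0, Subtype.ext (gpath_zero x)⟩
    have hxm : (⟨x, hxker⟩ : ↥(fHom n τ).ker) ∈ Set.range γ :=
      ⟨1, Subtype.ext (gpath_one hτ x hx1 hx2)⟩
    exact hrange.subset_connectedComponent h1 hxm

end Comp

section Count

open Complex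

variable {n : ℕ} {τ : Equiv.Perm (Fin (2 * n))}

noncomputable def iU : ℂˣ :=
  ⟨Complex.I, -Complex.I, by simp [Complex.I_mul_I], by simp [Complex.I_mul_I]⟩

lemma iU_mul_iU : iU * iU = -1 := by
  apply Units.ext
  simp [iU, Complex.I_mul_I]

lemma units_ne_neg (u : ℂˣ) : u ≠ -u := by
  intro h
  have hv : (u : ℂ) = -(u : ℂ) := by
    have := congrArg Units.val h
    simpa using this
  have h0 : (u : ℂ) = 0 := by
    have h2 : (2 : ℂ) * (u : ℂ) = 0 := by ring_nf; linear_combination hv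
    simpa using h2
  exact Units.ne_zero u h0

lemma units_sqrt {u c : ℂˣ} (h : u * u = c * c) : u = c ∨ u = -c := by
  have hv : (u : ℂ) ^ 2 = (c : ℂ) ^ 2 := by
    have := congrArg Units.val h
    simpa [sq] using this
  rcases (Commute.all (u : ℂ) (c : ℂ)).sq_eq_sq_iff_eq_or_eq_neg.mp hv with h1 | h1
  · left; exact Units.ext (by simpa using h1)
  · right; exact Units.ext (by simpa using h1)

/-- target coordinate sets -/
noncomputable def Bset (n : ℕ) (τ : Equiv.Perm (Fin (2 * n))) (c : ℂˣ) :
    Fin n → Set ℂˣ :=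
  fun i => if τ (emb n i) = emb n i then {c, -c} else {1}

lemma Bset_finite (c : ℂˣ) (i : Fin n) : (Bset n τ c i).Finite := by
  unfold Bset
  split
  · exact (Set.finite_singleton _).insert _
  · exact Set.finite_singleton _

def piSetEquiv {ι : Type*} {α : ι → Type*} (B : ∀ i, Set (α i)) :
    (Set.pi Set.univ B) ≃ (∀ i, B i) where
  toFun f i := ⟨f.1 i, f.2 i (Set.mem_univ i)⟩
  invFun g := ⟨fun i => g i, fun i _ => (g i).2⟩
  left_inv f := rfl
  right_inv g := rfl

lemma card_singleton_prod {α β : Type*} (a : α) (S : Set β) :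
    Nat.card (↥(({a} : Set α) ×ˢ S)) = Nat.card ↥S := by
  apply Nat.card_congr
  exact {
    toFun := fun p => ⟨p.1.2, p.2.2⟩
    invFun := fun x => ⟨(a, x.1), ⟨rfl, x.2⟩⟩
    left_inv := fun p => by
      apply Subtype.ext
      obtain ⟨⟨p1, p2⟩, hp1, hp2⟩ := p
      have : p1 = a := hp1
      simp [this]
    right_inv := fun x => rfl }

lemma card_pi_Bset (c : ℂˣ) :
    Nat.card ↥(Set.pi Set.univ (Bset n τ c)) =
      2 ^ ((Finset.univ : Finset (Fin n)).filter
        (fun i : Fin n => τ (emb n i) = emb n i)).card := by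
  rw [Nat.card_congr (piSetEquiv (Bset n τ c))]
  rw [Nat.card_pi]
  have hcard : ∀ i : Fin n, Nat.card ↥(Bset n τ c i) =
      if τ (emb n i) = emb n i then 2 else 1 := by
    intro i
    unfold Bset
    split
    · rw [Nat.card_coe_set_eq, Set.ncard_pair (units_ne_neg c)]
    · rw [Nat.card_coe_set_eq, Set.ncard_singleton]
  rw [Finset.prod_congr rfl (fun i _ => hcard i)]
  rw [Finset.prod_ite, Finset.prod_const, Finset.prod_const, one_pow, mul_one]

end Count

section Range

variable {n : ℕ} {τ : Equiv.Perm (Fin (2 * n))}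

lemma Pfix_mem_pi {t : Fin n → ℂˣ} {c : ℂˣ}
    (hf : ∀ i : Fin n, τ (emb n i) = emb n i → t i * t i = c * c) :
    Pfix n τ t ∈ Set.pi Set.univ (Bset n τ c) := by
  intro i _
  show (if τ (emb n i) = emb n i then t i else 1) ∈ Bset n τ c i
  unfold Bset
  by_cases h : τ (emb n i) = emb n i
  · rw [if_pos h, if_pos h]
    rcases units_sqrt (hf i h) with h1 | h1
    · exact Or.inl h1
    · exact Or.inr h1
  · rw [if_neg h, if_neg h]
    exact rfl

lemma fixed_sq (hτ : τ * τ = 1) {t : Fin n → ℂˣ} {i : Fin n}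
    (hi : τ (emb n i) = emb n i) : fHom n τ t i = t i * t i := by
  obtain ⟨hlt, hpt⟩ := (fixed_iff i).mp hi
  rw [fHom_apply hτ, if_pos hlt, hpt]

lemma range_sub (hτ : τ * τ = 1) :
    Set.range (fun t : ↥(Ttau n τ) => Phi n τ (t : Fin n → ℂˣ)) ⊆
      ((({(1 : Fin n → ℂˣ)} : Set (Fin n → ℂˣ)) ×ˢ Set.pi Set.univ (Bset n τ 1)) ∪
       (({negOne n} : Set (Fin n → ℂˣ)) ×ˢ Set.pi Set.univ (Bset n τ iU))) := by
  rintro p ⟨t, rfl⟩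
  rcases (mem_Ttau_iff _).mp t.2 with h | h
  · left
    constructor
    · show fHom n τ (t : Fin n → ℂˣ) ∈ ({1} : Set (Fin n → ℂˣ))
      rw [h]; exact rfl
    · show Pfix n τ (t : Fin n → ℂˣ) ∈ _
      apply Pfix_mem_pi
      intro i hi
      have := (fixed_sq hτ hi).symm.trans (congrFun h i)
      simpa using this
  · right
    constructor
    · show fHom n τ (t : Fin n → ℂˣ) ∈ ({negOne n} : Set (Fin n → ℂˣ))
      rw [h]; exact rfl
    · show Pfix n τ (t : Fin n → ℂˣ) ∈ _
      apply Pfix_mem_pi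
      intro i hi
      have h2 := (fixed_sq hτ hi).symm.trans (congrFun h i)
      rw [iU_mul_iU]
      exact h2

lemma piece1_sub_range (hτ : τ * τ = 1) (hs : ∀ j : Fin (2 * n), τ j.rev = (τ j).rev) :
    ((({(1 : Fin n → ℂˣ)} : Set (Fin n → ℂˣ)) ×ˢ Set.pi Set.univ (Bset n τ 1))) ⊆
      Set.range (fun t : ↥(Ttau n τ) => Phi n τ (t : Fin n → ℂˣ)) := by
  rintro p ⟨ha, hb⟩
  obtain ⟨a, b⟩ := p
  have ha' : a = 1 := ha
  have hb2 : ∀ i : Fin n, b i ∈ Bset n τ 1 i := fun i => hb i (Set.mem_univ i)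
  have hb' : ∀ i : Fin n, ¬ τ (emb n i) = emb n i → b i = 1 := by
    intro i hi
    have := hb2 i
    unfold Bset at this
    rw [if_neg hi] at this
    exact this
  have hbf : ∀ i : Fin n, τ (emb n i) = emb n i → b i * b i = 1 := by
    intro i hi
    have h5 := hb2 i
    unfold Bset at h5
    rw [if_pos hi] at h5
    simp only [Set.mem_insert_iff, Set.mem_singleton_iff] at h5
    rcases h5 with h1 | h1 <;> rw [h1] <;> simp
  have hf : fHom n τ (bld n τ 1 b) = 1 := by
    have := fHom_bld hτ hs 1 b (by simp) hbf (fun _ _ => rfl)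
    rw [this]; rfl
  refine ⟨⟨bld n τ 1 b, ?_⟩, ?_⟩
  · exact (mem_Ttau_iff _).mpr (Or.inl hf)
  · show (fHom n τ (bld n τ 1 b), Pfix n τ (bld n τ 1 b)) = (a, b)
    rw [hf, ha', Pfix_bld]
    refine Prod.ext rfl ?_
    funext i
    by_cases hi : τ (emb n i) = emb n i
    · simp only [if_pos hi]
    · simp only [if_neg hi]
      exact (hb' i hi).symm

lemma piece2_sub_range (hτ : τ * τ = 1) (hs : ∀ j : Fin (2 * n), τ j.rev = (τ j).rev)
    (hR : ∀ j : Fin n, τ (emb n j) ≠ (emb n j).rev) :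
    ((({negOne n} : Set (Fin n → ℂˣ)) ×ˢ Set.pi Set.univ (Bset n τ iU))) ⊆
      Set.range (fun t : ↥(Ttau n τ) => Phi n τ (t : Fin n → ℂˣ)) := by
  rintro p ⟨ha, hb⟩
  obtain ⟨a, b⟩ := p
  have ha' : a = negOne n := ha
  have hb2 : ∀ i : Fin n, b i ∈ Bset n τ iU i := fun i => hb i (Set.mem_univ i)
  have hb' : ∀ i : Fin n, ¬ τ (emb n i) = emb n i → b i = 1 := by
    intro i hi
    have := hb2 i
    unfold Bset at this
    rw [if_neg hi] at this
    exact this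
  have hbf : ∀ i : Fin n, τ (emb n i) = emb n i → b i * b i = -1 := by
    intro i hi
    have h5 := hb2 i
    unfold Bset at h5
    rw [if_pos hi] at h5
    simp only [Set.mem_insert_iff, Set.mem_singleton_iff] at h5
    rcases h5 with h1 | h1 <;> rw [h1]
    · exact iU_mul_iU
    · rw [neg_mul_neg]; exact iU_mul_iU
  have hf : fHom n τ (bld n τ (-1) b) = negOne n := by
    have := fHom_bld hτ hs (-1) b (by simp) hbf (fun i hi => absurd hi (hR i))
    rw [this]; rfl
  refine ⟨⟨bld n τ (-1) b, ?_⟩, ?_⟩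
  · exact (mem_Ttau_iff _).mpr (Or.inr hf)
  · show (fHom n τ (bld n τ (-1) b), Pfix n τ (bld n τ (-1) b)) = (a, b)
    rw [hf, ha', Pfix_bld]
    refine Prod.ext rfl ?_
    funext i
    by_cases hi : τ (emb n i) = emb n i
    · simp only [if_pos hi]
    · simp only [if_neg hi]
      exact (hb' i hi).symm

lemma no_neg_of_rev (hτ : τ * τ = 1) {j₀ : Fin n} (hj : τ (emb n j₀) = (emb n j₀).rev)
    (t : Fin n → ℂˣ) : fHom n τ t ≠ negOne n := by
  intro h
  obtain ⟨hlt, hpt⟩ := (revfix_iff j₀).mp hj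
  have h2 := congrFun h j₀
  rw [fHom_apply hτ, if_neg hlt, hpt] at h2
  have h3 : (1 : ℂˣ) = negOne n j₀ := by rw [← h2]; simp
  have h4 := congrArg Units.val h3
  simp only [Units.val_one, negOne, Units.val_neg] at h4
  norm_num at h4

end Range

section Final

variable {n : ℕ} {τ : Equiv.Perm (Fin (2 * n))}

lemma phi_mem_piece1 (hτ : τ * τ = 1) {t : Fin n → ℂˣ} (h : fHom n τ t = 1) :
    Phi n τ t ∈ ((({(1 : Fin n → ℂˣ)} : Set (Fin n → ℂˣ)) ×ˢ
      Set.pi Set.univ (Bset n τ 1)) : Set ((Fin n → ℂˣ) × (Fin n → ℂˣ))) := by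
  constructor
  · show fHom n τ t ∈ ({1} : Set (Fin n → ℂˣ))
    rw [h]; exact rfl
  · show Pfix n τ t ∈ _
    apply Pfix_mem_pi
    intro i hi
    have := (fixed_sq hτ hi).symm.trans (congrFun h i)
    simpa using this

lemma one_ne_negOne (hn : 0 < n) : (1 : Fin n → ℂˣ) ≠ negOne n := by
  intro h
  have := congrFun h ⟨0, hn⟩
  have hv := congrArg Units.val this
  simp only [Pi.one_apply, Units.val_one, negOne, Units.val_neg] at hv
  norm_num at hv


/-- Let `τ ∈ S_{2n}` be an involution which is a signed element,
acting on `T = {diag(a_1,…,a_n,a_n⁻¹,…,a_1⁻¹)}` by permuting coordinates, and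
let `k = #{i ∈ {1,…,n} : τ(i) = i}`.  If `τ(i) ≠ 2n+1-i` for all `i`, then
`|T_τ / (T^{-τ})_0| = 2^{k+1}`; if `τ(i) = 2n+1-i` for some `i`, then
`|T_τ / (T^{-τ})_0| = 2^k`. -/
theorem stmt15 (n : ℕ) (hn : 0 < n) (τ : Equiv.Perm (Fin (2 * n)))
    (hτinv : τ * τ = 1)
    (hsigned : ∀ j : Fin (2 * n), τ j.rev = (τ j).rev) :
    ((∀ i : Fin (2 * n), τ i ≠ i.rev) →
      Nat.card (↥(Ttau n τ) ⧸ (TminusComp n τ).subgroupOf (Ttau n τ)) =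
        2 ^ ((((Finset.univ : Finset (Fin n)).filter
          (fun i : Fin n => τ ⟨(i : ℕ), by omega⟩ = ⟨(i : ℕ), by omega⟩)).card) + 1)) ∧
    ((∃ i : Fin (2 * n), τ i = i.rev) →
      Nat.card (↥(Ttau n τ) ⧸ (TminusComp n τ).subgroupOf (Ttau n τ)) =
        2 ^ (((Finset.univ : Finset (Fin n)).filter
          (fun i : Fin n => τ ⟨(i : ℕ), by omega⟩ = ⟨(i : ℕ), by omega⟩)).card)) := by
  -- the filter in the statement coincides with ours
  have hfilter : ((Finset.univ : Finset (Fin n)).filter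
      (fun i : Fin n => τ ⟨(i : ℕ), by omega⟩ = ⟨(i : ℕ), by omega⟩)) =
      ((Finset.univ : Finset (Fin n)).filter (fun i : Fin n => τ (emb n i) = emb n i)) := by
    apply Finset.filter_congr
    intro i _
    rfl
  -- reduce the quotient to the range of Φ restricted to T_τ
  have hsub : (TminusComp n τ).subgroupOf (Ttau n τ) =
      ((Phi n τ).comp (Ttau n τ).subtype).ker := by
    rw [TminusComp_eq hτinv hsigned, Subgroup.subgroupOf]
    exact MonoidHom.comap_ker _ _
  have hcardq : Nat.card (↥(Ttau n τ) ⧸ (TminusComp n τ).subgroupOf (Ttau n τ)) =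
      Nat.card ↥(Set.range (fun t : ↥(Ttau n τ) => Phi n τ (t : Fin n → ℂˣ))) := by
    rw [hsub]
    rw [Nat.card_congr (QuotientGroup.quotientKerEquivRange
      ((Phi n τ).comp (Ttau n τ).subtype)).toEquiv]
    exact Nat.card_congr (Equiv.setCongr (MonoidHom.coe_range _))
  have hfin1 : ((({(1 : Fin n → ℂˣ)} : Set (Fin n → ℂˣ)) ×ˢ
      Set.pi Set.univ (Bset n τ 1))).Finite :=
    (Set.finite_singleton _).prod (Set.Finite.pi (fun i => Bset_finite 1 i))
  have hfin2 : ((({negOne n} : Set (Fin n → ℂˣ)) ×ˢ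
      Set.pi Set.univ (Bset n τ iU))).Finite :=
    (Set.finite_singleton _).prod (Set.Finite.pi (fun i => Bset_finite iU i))
  constructor
  · -- no i with τ i = rev i
    intro hno
    have hR : ∀ j : Fin n, τ (emb n j) ≠ (emb n j).rev := fun j => hno (emb n j)
    have hrange : Set.range (fun t : ↥(Ttau n τ) => Phi n τ (t : Fin n → ℂˣ)) =
        ((({(1 : Fin n → ℂˣ)} : Set (Fin n → ℂˣ)) ×ˢ Set.pi Set.univ (Bset n τ 1)) ∪
         (({negOne n} : Set (Fin n → ℂˣ)) ×ˢ Set.pi Set.univ (Bset n τ iU))) := by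
      apply Set.Subset.antisymm (range_sub hτinv)
      exact Set.union_subset (piece1_sub_range hτinv hsigned)
        (piece2_sub_range hτinv hsigned hR)
    have hdisj : Disjoint
        ((({(1 : Fin n → ℂˣ)} : Set (Fin n → ℂˣ)) ×ˢ Set.pi Set.univ (Bset n τ 1)))
        ((({negOne n} : Set (Fin n → ℂˣ)) ×ˢ Set.pi Set.univ (Bset n τ iU))) := by
      rw [Set.disjoint_left]
      rintro p ⟨hp1, _⟩ ⟨hq1, _⟩
      have h1 : p.1 = 1 := hp1
      have h2 : p.1 = negOne n := hq1
      exact one_ne_negOne hn (h1.symm.trans h2)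
    rw [hcardq, hrange, Nat.card_coe_set_eq, Set.ncard_union_eq hdisj hfin1 hfin2,
      ← Nat.card_coe_set_eq, ← Nat.card_coe_set_eq,
      card_singleton_prod, card_singleton_prod, card_pi_Bset, card_pi_Bset, hfilter]
    rw [pow_succ]
    ring
  · -- some i with τ i = rev i
    rintro ⟨i, hi⟩
    obtain ⟨j₀, hj₀⟩ : ∃ j : Fin n, τ (emb n j) = (emb n j).rev := by
      rcases lt_or_ge (i : ℕ) n with hlt | hge
      · refine ⟨⟨(i : ℕ), hlt⟩, ?_⟩
        have hei : emb n ⟨(i : ℕ), hlt⟩ = i := Fin.ext rfl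
        rw [hei]; exact hi
      · have hbound := i.isLt
        refine ⟨⟨2 * n - 1 - (i : ℕ), by omega⟩, ?_⟩
        have hei : emb n ⟨2 * n - 1 - (i : ℕ), by omega⟩ = i.rev := by
          apply Fin.ext
          rw [Fin.val_rev]
          simp only [emb_val]
          omega
        rw [hei, hsigned i, hi, Fin.rev_rev]
    have hrange : Set.range (fun t : ↥(Ttau n τ) => Phi n τ (t : Fin n → ℂˣ)) =
        ((({(1 : Fin n → ℂˣ)} : Set (Fin n → ℂˣ)) ×ˢ Set.pi Set.univ (Bset n τ 1))) := by
      apply Set.Subset.antisymm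
      · rintro p ⟨t, rfl⟩
        have h1 : fHom n τ (t : Fin n → ℂˣ) = 1 :=
          ((mem_Ttau_iff _).mp t.2).resolve_right (no_neg_of_rev hτinv hj₀ _)
        exact phi_mem_piece1 hτinv h1
      · exact piece1_sub_range hτinv hsigned
    rw [hcardq, hrange, card_singleton_prod, card_pi_Bset, hfilter]

end Final
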